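/- arXiv:1503.06718 — 2 statements merged into one kernel-verified Lean document; each statement's English description precedes it below -/
import Mathlib

section
/- For d = 3 and h ≤ ⌈n/3⌉, every element of Λ_3 of height h lying in the same congruence class Λ_{3,k} as n·e(1) belongs to the principal ideal I(n·e(1)); that is, |{w ∈ I(n·e(1)) : ht(w) = h}| = |Λ_3^{(h)} ∩ Λ_{3,k}|, where k ∈ {1,2,3} satisfies n·e(1) ∈ Λ_{3,k}. -/
/-- `X_3 = {(1,-2,0), (-2,1,0), (-1,-1,1), (0,0,-1)}`. -/
def X3 : Set (Fin 3 → ℤ) := {![1, -2, 0], ![-2, 1, 0], ![-1, -1, 1], ![0, 0, -1]}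

def nonneg3 (v : Fin 3 → ℤ) : Prop := ∀ i, 0 ≤ v i

/-- Covering relation `v ⋖ w` on `Λ_3 = ℤ_{≥0}^3`. -/
def cov3 (v w : Fin 3 → ℤ) : Prop := nonneg3 v ∧ nonneg3 w ∧ ∃ x ∈ X3, v = w + x

/-- The order `≺` on `Λ_3`. -/
def prec3 : (Fin 3 → ℤ) → (Fin 3 → ℤ) → Prop := Relation.TransGen cov3

/-- The principal ideal `I(v) = {v} ∪ {w : w ≺ v}`. -/
def ideal3 (v : Fin 3 → ℤ) : Set (Fin 3 → ℤ) := {v} ∪ { w | prec3 w v }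

/-- `C_n^{(3)} = |I(n·e(1))|`. -/
noncomputable def C3 (n : ℕ) : ℕ := (ideal3 ![(n : ℤ), 0, 0]).ncard

/-- `C_{n,h}^{(3)}`: the number of elements of height `h` in `I(n·e(1))`. -/
noncomputable def C3h (n h : ℕ) : ℕ :=
  ({ w ∈ ideal3 ![(n : ℤ), 0, 0] | w 0 + w 1 + w 2 = (h : ℤ) }).ncard

/-!
Call `v 0 + 2 v 1 + 3 v 2` the weight of `v`. Every `x ∈ X_3` has weight divisible by `3`, so all
of `I(n·e(1))` has weight `≡ n (mod 3)`. Conversely `(-1,-1,1)` and `(-2,1,0)` have weight `0`: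
undoing them clears the last two coordinates of `w` and reaches `(weight w)·e(1)` from below.
Multiples of `e(1)` climb in steps of three, `m·e(1) ≺ (m,0,1) ≺ (m+1,1,0) ≺ (m+3)·e(1)`. Finally a
vector of height `h` has weight at most `3h ≤ n + 2`, hence at most `n` when it is `≡ n (mod 3)`.
-/

def weight3 (v : Fin 3 → ℤ) : ℤ := v 0 + 2 * v 1 + 3 * v 2

lemma weight3_nonneg {w : Fin 3 → ℤ} (hw : nonneg3 w) : 0 ≤ weight3 w := by
  have := hw 0; have := hw 1; have := hw 2
  unfold weight3; omega

lemma weight3_le_three_mul {w : Fin 3 → ℤ} (hw : nonneg3 w) :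
    weight3 w ≤ 3 * (w 0 + w 1 + w 2) := by
  have := hw 0; have := hw 1
  unfold weight3; omega

lemma nonneg3_vec {a b c : ℤ} (ha : 0 ≤ a) (hb : 0 ≤ b) (hc : 0 ≤ c) : nonneg3 ![a, b, c] := by
  intro i; fin_cases i <;> simpa

lemma mem_ideal3_iff_reflTransGen {v w : Fin 3 → ℤ} :
    w ∈ ideal3 v ↔ Relation.ReflTransGen cov3 w v := by
  rw [Relation.reflTransGen_iff_eq_or_transGen, ideal3, Set.mem_union, Set.mem_singleton_iff,
    eq_comm]
  rfl

section Moves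

variable {a b c : ℤ}

lemma cov3_add_neg_one_neg_one_one (ha : 0 ≤ a) (hb : 0 ≤ b) (hc : 0 ≤ c) :
    cov3 ![a, b, c + 1] ![a + 1, b + 1, c] :=
  ⟨nonneg3_vec ha hb (by omega), nonneg3_vec (by omega) (by omega) hc, ![-1, -1, 1],
    by simp [X3], by funext i; fin_cases i <;> simp⟩

lemma cov3_add_neg_two_one_zero (ha : 0 ≤ a) (hb : 0 ≤ b) (hc : 0 ≤ c) :
    cov3 ![a, b + 1, c] ![a + 2, b, c] :=
  ⟨nonneg3_vec ha (by omega) hc, nonneg3_vec (by omega) hb hc, ![-2, 1, 0],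
    by simp [X3], by funext i; fin_cases i <;> simp⟩

lemma cov3_add_zero_zero_neg_one (ha : 0 ≤ a) (hb : 0 ≤ b) (hc : 0 ≤ c) :
    cov3 ![a, b, c] ![a, b, c + 1] :=
  ⟨nonneg3_vec ha hb hc, nonneg3_vec ha hb (by omega), ![0, 0, -1],
    by simp [X3], by funext i; fin_cases i <;> simp⟩

end Moves

lemma reflTransGen_cov3_weight_e1 (N : ℕ) :
    ∀ a b c : ℤ, 0 ≤ a → 0 ≤ b → 0 ≤ c → b + 2 * c = N →
      Relation.ReflTransGen cov3 ![a, b, c] ![a + 2 * b + 3 * c, 0, 0] := by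
  induction N with
  | zero =>
    intro a b c _ _ _ hN
    obtain ⟨rfl, rfl⟩ : b = 0 ∧ c = 0 := by omega
    simpa using Relation.ReflTransGen.refl
  | succ N ih =>
    intro a b c ha hb hc hN
    rcases (by omega : 0 < c ∨ (c = 0 ∧ 0 < b)) with hc0 | ⟨rfl, hb0⟩
    · obtain ⟨c, rfl⟩ : ∃ c', c = c' + 1 := ⟨c - 1, by ring⟩
      rw [show a + 2 * b + 3 * (c + 1) = a + 1 + 2 * (b + 1) + 3 * c by ring]
      exact .head (cov3_add_neg_one_neg_one_one ha hb (by omega))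
        (ih _ _ _ (by omega) (by omega) (by omega) (by push_cast at hN ⊢; omega))
    · obtain ⟨b, rfl⟩ : ∃ b', b = b' + 1 := ⟨b - 1, by ring⟩
      rw [show a + 2 * (b + 1) + 3 * 0 = a + 2 + 2 * b + 3 * 0 by ring]
      exact .head (cov3_add_neg_two_one_zero ha (by omega) le_rfl)
        (ih _ _ _ (by omega) (by omega) le_rfl (by push_cast at hN ⊢; omega))

lemma reflTransGen_cov3_of_nonneg3 {w : Fin 3 → ℤ} (hw : nonneg3 w) :
    Relation.ReflTransGen cov3 w ![weight3 w, 0, 0] := by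
  have hvec : w = ![w 0, w 1, w 2] := by funext i; fin_cases i <;> rfl
  rw [hvec]
  exact reflTransGen_cov3_weight_e1 (w 1 + 2 * w 2).toNat _ _ _ (hw 0) (hw 1) (hw 2)
    (by have := hw 1; have := hw 2; omega)

lemma reflTransGen_cov3_e1_add_three_mul {m : ℤ} (hm : 0 ≤ m) (t : ℕ) :
    Relation.ReflTransGen cov3 ![m, 0, 0] ![m + 3 * t, 0, 0] := by
  induction t with
  | zero => simpa using Relation.ReflTransGen.refl
  | succ t ih =>
    have hm' : 0 ≤ m + 3 * t := by positivity
    have up₁ := cov3_add_zero_zero_neg_one hm' le_rfl le_rfl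
    have up₂ := cov3_add_neg_one_neg_one_one hm' le_rfl le_rfl
    have up₃ := cov3_add_neg_two_one_zero (a := m + 3 * t + 1) (by omega) le_rfl le_rfl
    rw [zero_add] at up₂ up₃
    rw [Nat.cast_succ, show m + 3 * (t + 1 : ℤ) = m + 3 * t + 1 + 2 by ring]
    exact ((ih.tail up₁).tail up₂).tail up₃

lemma mem_ideal3_e1_of_weight3 {w : Fin 3 → ℤ} {n : ℤ} (hw : nonneg3 w) (hle : weight3 w ≤ n)
    (hdvd : (3 : ℤ) ∣ n - weight3 w) : w ∈ ideal3 ![n, 0, 0] := by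
  obtain ⟨t, ht⟩ := hdvd
  have climb := reflTransGen_cov3_e1_add_three_mul (weight3_nonneg hw) t.toNat
  rw [Int.toNat_of_nonneg (by omega), ← ht, add_sub_cancel] at climb
  exact mem_ideal3_iff_reflTransGen.mpr ((reflTransGen_cov3_of_nonneg3 hw).trans climb)

lemma dvd_weight3_sub_of_cov3 {v w : Fin 3 → ℤ} (h : cov3 v w) :
    (3 : ℤ) ∣ weight3 w - weight3 v := by
  obtain ⟨_, _, x, hx, rfl⟩ := h
  rcases hx with rfl | rfl | rfl | rfl <;> simp [weight3] <;> omega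

lemma nonneg3_and_dvd_of_reflTransGen {v w : Fin 3 → ℤ} (hv : nonneg3 v)
    (hwv : Relation.ReflTransGen cov3 w v) : nonneg3 w ∧ (3 : ℤ) ∣ weight3 v - weight3 w := by
  induction hwv using Relation.ReflTransGen.head_induction_on with
  | refl => exact ⟨hv, by simp⟩
  | head hcov _ ih =>
    exact ⟨hcov.1, by simpa using dvd_add ih.2 (dvd_weight3_sub_of_cov3 hcov)⟩

theorem stmt8_general (n h : ℕ) (hh : h ≤ (n + 2) / 3) (k : ℕ)
    (hnk : (3 : ℤ) ∣ ((n : ℤ) - (k : ℤ))) :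
    (∀ w : Fin 3 → ℤ, nonneg3 w → w 0 + w 1 + w 2 = (h : ℤ) →
        (3 : ℤ) ∣ (w 0 + 2 * w 1 + 3 * w 2 - (k : ℤ)) → w ∈ ideal3 ![(n : ℤ), 0, 0]) ∧
    C3h n h = Set.ncard { w : Fin 3 → ℤ | nonneg3 w ∧ w 0 + w 1 + w 2 = (h : ℤ) ∧
        (3 : ℤ) ∣ (w 0 + 2 * w 1 + 3 * w 2 - (k : ℤ)) } := by
  have hmem : ∀ w : Fin 3 → ℤ, nonneg3 w → w 0 + w 1 + w 2 = (h : ℤ) →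
      (3 : ℤ) ∣ (weight3 w - k) → w ∈ ideal3 ![(n : ℤ), 0, 0] := by
    intro w hw hsum hdvd
    have hdvd' : (3 : ℤ) ∣ n - weight3 w := by
      simpa only [sub_sub_sub_cancel_right] using dvd_sub hnk hdvd
    have hle : weight3 w ≤ 3 * h := hsum ▸ weight3_le_three_mul hw
    refine mem_ideal3_e1_of_weight3 hw ?_ hdvd'
    obtain ⟨t, ht⟩ := hdvd'
    omega
  refine ⟨hmem, congrArg Set.ncard (Set.ext fun w => ?_)⟩
  refine ⟨fun ⟨hw, hsum⟩ => ?_, fun ⟨hw, hsum, hdvd⟩ => ⟨hmem w hw hsum hdvd, hsum⟩⟩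
  obtain ⟨hnonneg, hdvd⟩ := nonneg3_and_dvd_of_reflTransGen
    (nonneg3_vec (by positivity) le_rfl le_rfl) (mem_ideal3_iff_reflTransGen.mp hw)
  refine ⟨hnonneg, hsum, ?_⟩
  simpa [weight3] using dvd_sub hnk hdvd

theorem stmt8 (n h : ℕ) (hh : h ≤ (n + 2) / 3) (k : ℕ) (hk : k ∈ ({1, 2, 3} : Set ℕ))
    (hnk : (3 : ℤ) ∣ ((n : ℤ) - (k : ℤ))) :
    (∀ w : Fin 3 → ℤ, nonneg3 w → w 0 + w 1 + w 2 = (h : ℤ) →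
        (3 : ℤ) ∣ (w 0 + 2 * w 1 + 3 * w 2 - (k : ℤ)) → w ∈ ideal3 ![(n : ℤ), 0, 0]) ∧
    C3h n h = Set.ncard { w : Fin 3 → ℤ | nonneg3 w ∧ w 0 + w 1 + w 2 = (h : ℤ) ∧
        (3 : ℤ) ∣ (w 0 + 2 * w 1 + 3 * w 2 - (k : ℤ)) } :=
  stmt8_general n h hh k hnk
end

section
/- For d = 3 and n ≥ 0, C_n^{(3)} = ∑_{i ≥ 0} p_3(n - 3i), where p_3(m) is the number of partitions of m into at most 3 parts (with p_3(m) = 0 for m < 0). -/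
/-- `p_3(m)`: the number of partitions of `m` into at most three parts (0 for `m < 0`). -/
noncomputable def p3 (m : ℤ) : ℕ :=
  Set.ncard { p : ℕ × ℕ × ℕ |
    p.2.1 ≤ p.1 ∧ p.2.2 ≤ p.2.1 ∧ ((p.1 : ℤ) + p.2.1 + p.2.2) = m }

/-! The weight `v₀ + 2 v₁ + 3 v₂` of a vector changes by `0` or `-3` along each step of `X₃`, so
every element of `I(n·e(1))` is a nonnegative vector of weight at most `n` and congruent to `n`
modulo 3. Conversely, every such vector other than `n·e(1)` is covered by another one, whose
`depth3` is smaller by one, so by induction the ideal is exactly this set. A nonnegative vector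
of weight `m` is the vector of multiplicities of the parts `1, 2, 3` in a partition of `m`;
conjugating, these correspond to the partitions of `m` into at most three parts, and slicing the
ideal by the weights `n - 3 i` gives the sum. -/

lemma nonneg3_iff {v : Fin 3 → ℤ} : nonneg3 v ↔ 0 ≤ v 0 ∧ 0 ≤ v 1 ∧ 0 ≤ v 2 := by
  simp [nonneg3, Fin.forall_fin_succ]

lemma weight3_add (v w : Fin 3 → ℤ) : weight3 (v + w) = weight3 v + weight3 w := by
  simp only [weight3, Pi.add_apply]; ring

lemma weight3_of_mem_X3 {x : Fin 3 → ℤ} (hx : x ∈ X3) : weight3 x = 0 ∨ weight3 x = -3 := by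
  simp only [X3, Set.mem_insert_iff, Set.mem_singleton_iff] at hx
  rcases hx with rfl | rfl | rfl | rfl <;> simp [weight3]

lemma nonneg3_of_prec3 {v w : Fin 3 → ℤ} (h : prec3 v w) : nonneg3 v := by
  obtain ⟨u, hvu, -⟩ := Relation.TransGen.head'_iff.mp h
  exact hvu.1

lemma weight3_of_prec3 {v w : Fin 3 → ℤ} (h : prec3 v w) :
    weight3 v ≤ weight3 w ∧ 3 ∣ weight3 w - weight3 v := by
  induction h with
  | single h =>
    obtain ⟨-, -, x, hx, rfl⟩ := h
    rcases weight3_of_mem_X3 hx with hx | hx <;> rw [weight3_add, hx] <;> omega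
  | tail _ h ih =>
    obtain ⟨-, -, x, hx, rfl⟩ := h
    rcases weight3_of_mem_X3 hx with hx | hx <;> rw [weight3_add, hx] at ih <;> omega

def admissible3 (n : ℤ) (v : Fin 3 → ℤ) : Prop :=
  nonneg3 v ∧ weight3 v ≤ n ∧ 3 ∣ n - weight3 v

lemma admissible3_of_mem_ideal3 {n : ℕ} {v : Fin 3 → ℤ} (h : v ∈ ideal3 ![(n : ℤ), 0, 0]) :
    admissible3 n v := by
  rcases h with rfl | h
  · simp [admissible3, nonneg3_iff, weight3]
  · obtain ⟨hle, hdvd⟩ := weight3_of_prec3 h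
    have htop : weight3 ![(n : ℤ), 0, 0] = n := by simp [weight3]
    rw [htop] at hle hdvd
    exact ⟨nonneg3_of_prec3 h, hle, hdvd⟩

lemma mem_ideal3_of_cov3 {t v w : Fin 3 → ℤ} (hvw : cov3 v w) (hw : w ∈ ideal3 t) :
    v ∈ ideal3 t := by
  rcases hw with rfl | hw
  · exact Or.inr (.single hvw)
  · exact Or.inr (.head hvw hw)

def depth3 (n : ℤ) (v : Fin 3 → ℤ) : ℤ := n - weight3 v + 2 * v 2 + v 1

lemma exists_cov3_of_admissible3 {n : ℕ} {v : Fin 3 → ℤ} (hv : admissible3 n v)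
    (hne : v ≠ ![(n : ℤ), 0, 0]) :
    ∃ w, cov3 v w ∧ admissible3 n w ∧ depth3 n w = depth3 n v - 1 := by
  obtain ⟨hv0, hle, hdvd⟩ := hv
  suffices ∃ x ∈ X3, admissible3 n (v - x) ∧ depth3 n (v - x) = depth3 n v - 1 from
    let ⟨x, hx, hw, hdepth⟩ := this
    ⟨v - x, ⟨hv0, hw.1, x, hx, by abel⟩, hw, hdepth⟩
  rw [nonneg3_iff] at hv0
  simp only [admissible3, nonneg3_iff, depth3, weight3, Pi.sub_apply] at hle hdvd ⊢
  by_cases h2pos : 0 < v 2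
  · exact ⟨![-1, -1, 1], by simp [X3], by simp only [Matrix.cons_val]; omega⟩
  by_cases h1pos : 0 < v 1
  · exact ⟨![-2, 1, 0], by simp [X3], by simp only [Matrix.cons_val]; omega⟩
  have h0ne : v 0 ≠ n := fun h => hne (by ext i; fin_cases i <;> simp <;> omega)
  exact ⟨![0, 0, -1], by simp [X3], by simp only [Matrix.cons_val]; omega⟩

lemma mem_ideal3_of_admissible3 (n : ℕ) (v : Fin 3 → ℤ) (hv : admissible3 n v) :
    v ∈ ideal3 ![(n : ℤ), 0, 0] := by
  by_cases hne : v = ![(n : ℤ), 0, 0]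
  · exact Or.inl hne
  obtain ⟨w, hvw, hw, hdepth⟩ := exists_cov3_of_admissible3 hv hne
  exact mem_ideal3_of_cov3 hvw (mem_ideal3_of_admissible3 n w hw)
termination_by (depth3 n v).toNat
decreasing_by
  have := nonneg3_iff.mp hw.1; have := hw.2.1
  simp only [depth3] at hdepth ⊢
  omega

lemma ideal3_eq (n : ℕ) : ideal3 ![(n : ℤ), 0, 0] = {v | admissible3 n v} :=
  Set.ext fun v => ⟨admissible3_of_mem_ideal3, mem_ideal3_of_admissible3 n v⟩

def conjMult3 (p : ℕ × ℕ × ℕ) : Fin 3 → ℤ :=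
  ![(p.1 : ℤ) - p.2.1, (p.2.1 : ℤ) - p.2.2, p.2.2]

lemma conjMult3_injective : Function.Injective conjMult3 := by
  rintro ⟨a, b, c⟩ ⟨a', b', c'⟩ h
  have h0 := congrFun h 0; have h1 := congrFun h 1; have h2 := congrFun h 2
  simp only [conjMult3, Matrix.cons_val] at h0 h1 h2
  simp only [Prod.mk.injEq]
  omega

lemma p3_eq_ncard (m : ℤ) : p3 m = {v | nonneg3 v ∧ weight3 v = m}.ncard := by
  rw [p3, ← Set.ncard_image_of_injective _ conjMult3_injective]
  congr 1
  ext v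
  constructor
  · rintro ⟨p, ⟨hba, hcb, hsum⟩, rfl⟩
    simp only [Set.mem_ofPred_eq, nonneg3_iff, conjMult3, weight3, Matrix.cons_val]
    omega
  · rintro ⟨hv, hm⟩
    obtain ⟨h0, h1, h2⟩ := nonneg3_iff.mp hv
    simp only [weight3] at hm
    refine ⟨((v 0 + v 1 + v 2).toNat, (v 1 + v 2).toNat, (v 2).toNat),
      ⟨Int.toNat_le_toNat (by omega), Int.toNat_le_toNat (by omega), by simp only; omega⟩, ?_⟩
    ext i; fin_cases i <;> simp [conjMult3] <;> omega

lemma finite_weight3_eq (m : ℤ) : {v | nonneg3 v ∧ weight3 v = m}.Finite := by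
  refine (Set.finite_Icc 0 fun _ => m).subset fun v ⟨hv, hm⟩ => ⟨hv, fun i => ?_⟩
  obtain ⟨h0, h1, h2⟩ := nonneg3_iff.mp hv
  simp only [weight3] at hm
  fin_cases i <;> simp <;> omega

lemma setOf_admissible3_eq_biUnion (n : ℕ) :
    {v | admissible3 n v} =
      ⋃ i ∈ (Finset.range (n + 1) : Set ℕ), {v | nonneg3 v ∧ weight3 v = n - 3 * i} := by
  ext v
  simp only [admissible3, Set.mem_ofPred_eq, Set.mem_iUnion, Finset.coe_range, Set.mem_Iio]
  constructor
  · rintro ⟨hv, hle, k, hk⟩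
    obtain ⟨h0, h1, h2⟩ := nonneg3_iff.mp hv
    simp only [weight3] at hle hk ⊢
    exact ⟨k.toNat, by omega, hv, by omega⟩
  · rintro ⟨i, hi, hv, hm⟩
    exact ⟨hv, by omega, i, by omega⟩

lemma pairwiseDisjoint_weight3_eq (n : ℕ) (s : Set ℕ) :
    s.PairwiseDisjoint fun i : ℕ => {v | nonneg3 v ∧ weight3 v = n - 3 * i} :=
  fun i _ j _ hij => Set.disjoint_left.mpr fun _ hi hj => hij (by have := hi.2; have := hj.2; omega)

theorem stmt16 (n : ℕ) :
    C3 n = ∑ i ∈ Finset.range (n + 1), p3 ((n : ℤ) - 3 * i) := by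
  rw [C3, ideal3_eq, setOf_admissible3_eq_biUnion,
    Set.Finite.ncard_biUnion (Finset.finite_toSet _) (fun _ _ => finite_weight3_eq _)
      (pairwiseDisjoint_weight3_eq n _), finsum_mem_coe_finset]
  exact Finset.sum_congr rfl fun i _ => (p3_eq_ncard _).symm
end
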